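/- Suppose I has almost minimal multiplicity with respect to K, i.e., λ(K·I/K·J) = 1 for any minimal reduction J of I. Then for any minimal reduction J of I, λ(K·I^n/K·J·I^{n−1}) = 1 for all n = 1, …, r_J^K(I). -/

import Mathlib

set_option synthInstance.maxHeartbeats 1000000
set_option maxHeartbeats 1000000

open IsLocalRing Polynomial

/-- λ(A/B): the length of `A/B` as an `R`-module for ideals `A`, `B`. -/
noncomputable def lamQ {R : Type*} [CommRing R] (A B : Ideal R) : WithBot ℕ∞ :=
  Order.krullDim (Submodule R ((↥A) ⧸ (Submodule.comap (Submodule.subtype A) B)))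

/-- The K-reduction number of `I` with respect to `J`:
`r_J^K(I) = min {n | K·I^{n+1} = K·J·I^n}`. -/
noncomputable def redK {R : Type*} [CommRing R] (K J I : Ideal R) : ℕ :=
  sInf {n : ℕ | K * I ^ (n + 1) = K * J * I ^ n}

/-- `J` is a reduction of `I`. -/
def IsReduction {R : Type*} [CommRing R] (J I : Ideal R) : Prop :=
  J ≤ I ∧ ∃ n : ℕ, J * I ^ n = I ^ (n + 1)

/-- `J` is a minimal reduction of `I`. -/
def IsMinimalReduction {R : Type*} [CommRing R] (J I : Ideal R) : Prop :=
  IsReduction J I ∧ ∀ J' : Ideal R, IsReduction J' I → J' ≤ J → J' = J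

/-!
For `B ≤ A`, `λ(A/B) = 1` says exactly that `B ⋖ A` in the (modular) lattice of ideals. Pick
`k * x ∈ KI \ KJ` with `k ∈ K`, `x ∈ I`; since `KJ ⋖ KI` this forces `KI = KJ + xK`, and by
induction `KI^{n+1} = KJ·I^n + x^n·KI`. Multiplying by `x^n` and then adding `KJ·I^n` both
preserve weak covering, so `KJ·I^n ⩿ KI^{n+1}`, and the inclusion is strict below the
`K`-reduction number.
-/

theorem WCovBy.sup_right {α : Type*} [Lattice α] [IsModularLattice α] {a b : α}
    (h : a ⩿ b) (c : α) : a ⊔ c ⩿ b ⊔ c := by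
  refine ⟨sup_le_sup_right h.le c, fun L haL hLb => ?_⟩
  have hcL : c ≤ L := le_sup_right.trans haL.le
  rcases h.eq_or_eq (le_inf (le_sup_left.trans haL.le) h.le) inf_le_right with hLa | hLb'
  · refine haL.ne' ?_
    calc L = (c ⊔ b) ⊓ L := (inf_eq_right.mpr (sup_comm b c ▸ hLb.le)).symm
      _ = c ⊔ b ⊓ L := sup_inf_assoc_of_le b hcL
      _ = a ⊔ c := by rw [inf_comm, hLa, sup_comm]
  · exact hLb.not_ge (sup_le (hLb' ▸ inf_le_left) hcL)

theorem Submodule.map_wcovBy_map {R M N : Type*} [Semiring R] [AddCommMonoid M]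
    [AddCommMonoid N] [Module R M] [Module R N] (f : M →ₗ[R] N) {p q : Submodule R M}
    (h : p ⩿ q) : p.map f ⩿ q.map f := by
  refine ⟨map_mono h.le, fun L hpL hLq => ?_⟩
  rcases h.eq_or_eq (le_inf (map_le_iff_le_comap.mp hpL.le) h.le) inf_le_right with hp | hq
  · refine hpL.not_ge fun y hy => ?_
    obtain ⟨z, hzq, rfl⟩ := hLq.le hy
    have hz : z ∈ comap f L ⊓ q := ⟨hy, hzq⟩
    exact mem_map_of_mem (hp ▸ hz)
  · exact hLq.not_ge (map_le_iff_le_comap.mpr (hq ▸ inf_le_left))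

namespace Ideal

section CommSemiring

variable {R : Type*} [CommSemiring R] {K J I : Ideal R}

theorem span_singleton_mul_wcovBy_mul (r : R) {p q : Ideal R} (h : p ⩿ q) :
    span {r} * p ⩿ span {r} * q := by
  simp only [← smul_eq_mul, Submodule.ideal_span_singleton_smul]
  exact Submodule.map_wcovBy_map _ h

theorem exists_mem_eq_sup_span_singleton_mul (h : K * J ⋖ K * I) :
    ∃ x ∈ I, K * I = K * J ⊔ span {x} * K := by
  obtain ⟨k, hk, x, hx, hkx⟩ : ∃ k ∈ K, ∃ x ∈ I, k * x ∉ K * J := by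
    simpa [mul_le] using h.lt.not_ge
  have hle : K * J ⊔ span {x} * K ≤ K * I :=
    sup_le h.le (mul_comm K I ▸ mul_mono_left ((span_singleton_le_iff_mem I).mpr hx))
  have hlt : K * J < K * J ⊔ span {x} * K :=
    left_lt_sup.mpr fun hle' =>
      hkx (hle' (mul_comm x k ▸ mul_mem_mul (mem_span_singleton_self x) hk))
  exact ⟨x, hx, ((h.eq_or_eq hlt.le hle).resolve_left hlt.ne').symm⟩

theorem mul_pow_succ_eq_sup {P : Ideal R} (hJ : J ≤ I) (hP : P ≤ I)
    (h : K * I = K * J ⊔ P * K) (n : ℕ) :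
    K * I ^ (n + 1) = K * J * I ^ n ⊔ P ^ n * (K * I) := by
  refine le_antisymm ?_ (sup_le ?_ ?_)
  · induction n with
    | zero => simp
    | succ n ih =>
      calc K * I ^ (n + 2) = K * I ^ (n + 1) * I := by ring
        _ ≤ (K * J * I ^ n ⊔ P ^ n * (K * I)) * I := mul_mono_left ih
        _ = K * J * I ^ (n + 1) ⊔ P ^ n * (K * J ⊔ P * K) * I := by rw [sup_mul, ← h]; ring_nf
        _ = K * J * I ^ (n + 1) ⊔ (P ^ n * (K * J * I) ⊔ P ^ (n + 1) * (K * I)) := by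
          rw [mul_sup, sup_mul]; ring_nf
        _ ≤ K * J * I ^ (n + 1) ⊔ P ^ (n + 1) * (K * I) := by
          rw [← sup_assoc]
          refine sup_le_sup_right (sup_le le_rfl ?_) _
          calc P ^ n * (K * J * I) ≤ I ^ n * (K * J * I) := mul_mono_left (pow_right_mono hP n)
            _ = K * J * I ^ (n + 1) := by ring
  · calc K * J * I ^ n ≤ K * I * I ^ n := mul_mono_left (mul_mono_right hJ)
      _ = K * I ^ (n + 1) := by ring
  · calc P ^ n * (K * I) ≤ I ^ n * (K * I) := mul_mono_left (pow_right_mono hP n)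
      _ = K * I ^ (n + 1) := by ring

end CommSemiring

theorem mul_mul_pow_wcovBy_mul_pow_succ {R : Type*} [CommRing R] {K J I : Ideal R} (hJ : J ≤ I)
    (h : K * J ⋖ K * I) (n : ℕ) : K * J * I ^ n ⩿ K * I ^ (n + 1) := by
  obtain ⟨x, hx, hKI⟩ := exists_mem_eq_sup_span_singleton_mul h
  have hxJ : span {x ^ n} * (K * J) ≤ K * J * I ^ n := by
    calc span {x ^ n} * (K * J) ≤ I ^ n * (K * J) :=
          mul_mono_left ((span_singleton_le_iff_mem _).mpr (pow_mem_pow hx n))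
      _ = K * J * I ^ n := mul_comm _ _
  have hxI : span {x ^ n} * (K * I) ⊔ K * J * I ^ n = K * I ^ (n + 1) := by
    rw [mul_pow_succ_eq_sup hJ ((span_singleton_le_iff_mem I).mpr hx) hKI n,
      span_singleton_pow, sup_comm]
  simpa only [sup_eq_right.mpr hxJ, hxI] using
    (span_singleton_mul_wcovBy_mul (x ^ n) h.wcovBy).sup_right (K * J * I ^ n)

end Ideal

theorem lamQ_eq_one_iff_covBy {R : Type*} [CommRing R] {A B : Ideal R} (h : B ≤ A) :
    lamQ A B = 1 ↔ B ⋖ A := by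
  rw [lamQ, Order.krullDim_eq_one_iff_of_boundedOrder, ← isSimpleModule_iff,
    covBy_iff_quot_is_simple h]

theorem stmt13_general {R : Type*} [CommRing R]
    (I : Ideal R)
    (K : Ideal R)
    (hAMM : ∀ J : Ideal R, IsMinimalReduction J I → lamQ (K * I) (K * J) = 1) :
    ∀ J : Ideal R, IsMinimalReduction J I →
      ∀ n : ℕ, 1 ≤ n → n ≤ redK K J I →
        lamQ (K * I ^ n) (K * J * I ^ (n - 1)) = 1 := by
  intro J hJ n hn hnr
  obtain ⟨m, rfl⟩ : ∃ m, n = m + 1 := ⟨n - 1, by omega⟩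
  have hJI : J ≤ I := hJ.1.1
  have hcov : K * J ⋖ K * I :=
    (lamQ_eq_one_iff_covBy (Ideal.mul_mono_right hJI)).mp (hAMM J hJ)
  have hwcov := Ideal.mul_mul_pow_wcovBy_mul_pow_succ hJI hcov m
  have hne : K * J * I ^ m ≠ K * I ^ (m + 1) := fun heq =>
    (Nat.sInf_le heq.symm : redK K J I ≤ m).not_gt hnr
  rw [Nat.add_sub_cancel, lamQ_eq_one_iff_covBy hwcov.le]
  exact hwcov.covBy_of_ne hne

/-- Let `(R,m)` be a Cohen–Macaulay local ring with infinite residue field, `I` an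
`m`-primary ideal, `K ⊇ I` an ideal, and suppose `I` has almost minimal multiplicity with
respect to `K`, i.e. `λ(K·I/K·J) = 1` for any minimal reduction `J` of `I`. Then for any
minimal reduction `J` of `I`, `λ(K·I^n/K·J·I^{n−1}) = 1` for all `n = 1, …, r_J^K(I)`. -/
theorem stmt13 {R : Type*} [CommRing R] [IsNoetherianRing R] [IsLocalRing R]
    [Infinite (ResidueField R)]
    (d : ℕ) (hdim : ringKrullDim R = (d : ℕ))
    (hCM : ∃ rs : List R, rs.length = d ∧ (∀ r ∈ rs, r ∈ maximalIdeal R) ∧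
      RingTheory.Sequence.IsRegular R rs)
    (I : Ideal R) (hIprim : I.radical = maximalIdeal R)
    (K : Ideal R) (hIK : I ≤ K)
    (hAMM : ∀ J : Ideal R, IsMinimalReduction J I → lamQ (K * I) (K * J) = 1) :
    ∀ J : Ideal R, IsMinimalReduction J I →
      ∀ n : ℕ, 1 ≤ n → n ≤ redK K J I →
        lamQ (K * I ^ n) (K * J * I ^ (n - 1)) = 1 :=
  stmt13_general I K hAMM
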